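/- Let V, X, Y1, Y2 be finitely-valued random variables, with X, Y1, Y2 Boolean-valued, such that (Y1,Y2) is conditionally independent of V given X and, conditionally on X, (Y1,Y2) is distributed according to the BSSC with p = 1/2. If P(X=0) ≤ 1/5, then I(V;Y2) ≤ I(V;Y1). -/

import Mathlib

open MeasureTheory Real

noncomputable def prob {Ω : Type*} [MeasurableSpace Ω] (μ : Measure Ω) {A : Type*}
    (X : Ω → A) (a : A) : ℝ :=
  (μ (X ⁻¹' {a})).toReal

noncomputable def entropy {Ω : Type*} [MeasurableSpace Ω] (μ : Measure Ω) {A : Type*}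
    [Fintype A] (X : Ω → A) : ℝ :=
  ∑ a, Real.negMulLog (prob μ X a)

noncomputable def mutualInfo {Ω : Type*} [MeasurableSpace Ω] (μ : Measure Ω)
    {A B : Type*} [Fintype A] [Fintype B] (X : Ω → A) (Y : Ω → B) : ℝ :=
  entropy μ X + entropy μ Y - entropy μ (fun ω => (X ω, Y ω))

noncomputable def condMutualInfo {Ω : Type*} [MeasurableSpace Ω] (μ : Measure Ω)
    {A B C : Type*} [Fintype A] [Fintype B] [Fintype C]
    (X : Ω → A) (Y : Ω → B) (Z : Ω → C) : ℝ :=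
  entropy μ (fun ω => (X ω, Z ω)) + entropy μ (fun ω => (Y ω, Z ω))
    - entropy μ (fun ω => (X ω, Y ω, Z ω)) - entropy μ Z

/-- `W` and `Y` are conditionally independent given `X` (Markov chain `W → X → Y`). -/
def CondIndepGiven {Ω : Type*} [MeasurableSpace Ω] (μ : Measure Ω) {A B C : Type*}
    (W : Ω → A) (X : Ω → B) (Y : Ω → C) : Prop :=
  ∀ a b c, prob μ (fun ω => (W ω, X ω, Y ω)) (a, b, c) * prob μ X b
    = prob μ (fun ω => (W ω, X ω)) (a, b) * prob μ (fun ω => (X ω, Y ω)) (b, c)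

noncomputable def bsscK (x y1 y2 : Bool) : ℝ :=
  if x = false then (if y2 = false then 1 / 2 else 0)
  else (if y1 = true then 1 / 2 else 0)

def IsBSSC {Ω : Type*} [MeasurableSpace Ω] (μ : Measure Ω) (X Y1 Y2 : Ω → Bool) : Prop :=
  ∀ x y1 y2, prob μ (fun ω => (X ω, Y1 ω, Y2 ω)) (x, y1, y2) = prob μ X x * bsscK x y1 y2

noncomputable def binH (x : ℝ) : ℝ := Real.negMulLog x + Real.negMulLog (1 - x)

noncomputable def fskew (η : ℝ) : ℝ := binH (η / 2) - binH ((1 - η) / 2)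

/-! Write `r₀ a = P(V = a, X = 0)`, `r₁ a = P(V = a, X = 1)` and `η = P(X = 0)`. The channel makes
`H(V,Y₁) - H(V,Y₂) = ∑ₐ (r₀ a + r₁ a) fskew (r₀ a / (r₀ a + r₁ a))` and `H(Y₁) - H(Y₂) = fskew η`,
so `I(V;Y₁) - I(V;Y₂) ≥ 0` is a Jensen inequality for `fskew` at the mean `η`. It holds because
the tangent line of `fskew` at `η` lies above `fskew` on all of `[0, 1]`. Since
`fskew' x = log (1 + 2 / (x (1 - x))) / 2`, `fskew` is concave on `[0, 1/2]` and convex on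
`[1/2, 1]`; so the tangent at `η ≤ 1/2` dominates `fskew` on `[1/2, 1]` as soon as it does at the
endpoint `1`, i.e. `fskew η + fskew' η (1 - η) ≥ fskew 1 = log 2`. The left side decreases in `η`
and equals `log 2` at `η = 1/5`. -/

open Set

lemma fskew_eq_binEntropy (η : ℝ) : fskew η = binEntropy (η / 2) - binEntropy ((1 - η) / 2) := by
  simp only [fskew, binH, binEntropy_eq_negMulLog_add_negMulLog_one_sub]

lemma continuous_fskew : Continuous fskew := by
  simp only [funext fskew_eq_binEntropy]
  fun_prop

lemma fskew_one : fskew 1 = log 2 := by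
  simp [fskew_eq_binEntropy]

noncomputable def fskewDeriv (x : ℝ) : ℝ := log (1 + 2 / (x * (1 - x))) / 2

lemma hasDerivAt_fskew {x : ℝ} (hx₀ : 0 < x) (hx₁ : x < 1) :
    HasDerivAt fskew (fskewDeriv x) x := by
  have h₁ := (hasDerivAt_binEntropy (p := x / 2) (by positivity) (by linarith)).comp x
    ((hasDerivAt_id x).div_const 2)
  have h₂ := (hasDerivAt_binEntropy (p := (1 - x) / 2) (by linarith) (by linarith)).comp x
    (((hasDerivAt_id x).const_sub 1).div_const 2)
  rw [show fskew = _ from funext fskew_eq_binEntropy]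
  refine (h₁.sub h₂).congr_deriv ?_
  have hx₁' : 1 - x ≠ 0 := by linarith
  have h₃ : log (1 + 2 / (x * (1 - x)))
      = log (1 - x / 2) + log (1 - (1 - x) / 2) - (log (x / 2) + log ((1 - x) / 2)) := by
    rw [← log_mul (by linarith) (by linarith), ← log_mul (by linarith) (by linarith),
      ← log_div (by nlinarith) (by nlinarith)]
    congr 1
    field_simp
    ring
  rw [fskewDeriv, h₃]
  ring

lemma fskewDeriv_antitoneOn : AntitoneOn fskewDeriv (Ioc 0 (1 / 2)) := by
  rintro a ⟨ha₀, -⟩ b ⟨-, hb₁⟩ hab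
  have ha : 0 < a * (1 - a) := by nlinarith
  have hb : 0 < b * (1 - b) := by nlinarith
  have : a * (1 - a) ≤ b * (1 - b) := by nlinarith
  unfold fskewDeriv
  gcongr

lemma fskewDeriv_monotoneOn : MonotoneOn fskewDeriv (Ico (1 / 2) 1) := by
  rintro a ⟨ha₀, -⟩ b ⟨-, hb₁⟩ hab
  have ha : 0 < a * (1 - a) := by nlinarith
  have hb : 0 < b * (1 - b) := by nlinarith
  have : b * (1 - b) ≤ a * (1 - a) := by nlinarith
  unfold fskewDeriv
  gcongr

lemma ConcaveOn.le_add_mul_sub_of_hasDerivAt {S : Set ℝ} {f : ℝ → ℝ} {f' x y : ℝ}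
    (hf : ConcaveOn ℝ S f) (hx : x ∈ S) (hy : y ∈ S) (hf' : HasDerivAt f f' x) :
    f y ≤ f x + f' * (y - x) := by
  rcases lt_trichotomy x y with hxy | rfl | hxy
  · have := hf.slope_le_of_hasDerivAt hx hy hxy hf'
    rw [slope_def_field, div_le_iff₀ (sub_pos.2 hxy)] at this
    linarith
  · simp
  · have := hf.le_slope_of_hasDerivAt hy hx hxy hf'
    rw [slope_def_field, le_div_iff₀ (sub_pos.2 hxy)] at this
    linarith

lemma concaveOn_fskew : ConcaveOn ℝ (Icc 0 (1 / 2)) fskew := by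
  have hderiv : EqOn fskewDeriv (deriv fskew) (Ioo 0 (1 / 2)) := fun x hx =>
    ((hasDerivAt_fskew hx.1 (by linarith [hx.2])).deriv).symm
  refine AntitoneOn.concaveOn_of_deriv (convex_Icc _ _) continuous_fskew.continuousOn
    (fun x hx => ?_) ?_ <;> rw [interior_Icc] at *
  · exact (hasDerivAt_fskew hx.1 (by linarith [hx.2])).differentiableAt.differentiableWithinAt
  · exact (fskewDeriv_antitoneOn.mono Ioo_subset_Ioc_self).congr hderiv

lemma convexOn_fskew : ConvexOn ℝ (Icc (1 / 2) 1) fskew := by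
  have hderiv : EqOn fskewDeriv (deriv fskew) (Ioo (1 / 2) 1) := fun x hx =>
    ((hasDerivAt_fskew (by linarith [hx.1]) hx.2).deriv).symm
  refine MonotoneOn.convexOn_of_deriv (convex_Icc _ _) continuous_fskew.continuousOn
    (fun x hx => ?_) ?_ <;> rw [interior_Icc] at *
  · exact (hasDerivAt_fskew (by linarith [hx.1]) hx.2).differentiableAt.differentiableWithinAt
  · exact (fskewDeriv_monotoneOn.mono Ioo_subset_Ico_self).congr hderiv

lemma fskew_le_tangent_of_le_half {η t : ℝ} (hη₀ : 0 < η) (hη : η ≤ 1 / 2)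
    (ht : t ∈ Icc 0 (1 / 2)) : fskew t ≤ fskew η + fskewDeriv η * (t - η) :=
  concaveOn_fskew.le_add_mul_sub_of_hasDerivAt ⟨hη₀.le, hη⟩ ht
    (hasDerivAt_fskew hη₀ (by linarith))

lemma fskew_tangent_at_fifth_eval_one :
    fskew (1 / 5) + fskewDeriv (1 / 5) * (1 - 1 / 5) = log 2 := by
  have h₁ : log (1 / 10) = -log 2 - log 5 := by
    rw [show (1 / 10 : ℝ) = (2 * 5)⁻¹ by norm_num, log_inv, log_mul (by norm_num) (by norm_num)]
    ring
  have h₂ : log (9 / 10) = 2 * log 3 - log 2 - log 5 := by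
    rw [show (9 / 10 : ℝ) = 3 ^ 2 / (2 * 5) by norm_num, log_div (by norm_num) (by norm_num),
      log_pow, log_mul (by norm_num) (by norm_num)]
    push_cast
    ring
  have h₃ : log (2 / 5) = log 2 - log 5 := log_div (by norm_num) (by norm_num)
  have h₄ : log (3 / 5) = log 3 - log 5 := log_div (by norm_num) (by norm_num)
  have h₅ : log (27 / 2) = 3 * log 3 - log 2 := by
    rw [show (27 / 2 : ℝ) = 3 ^ 3 / 2 by norm_num, log_div (by norm_num) (by norm_num), log_pow]
    push_cast
    ring
  norm_num [fskew, binH, negMulLog, fskewDeriv, h₁, h₂, h₃, h₄, h₅]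
  ring

lemma log_two_le_fskew_tangent_eval_one {η : ℝ} (hη₀ : 0 < η) (hη : η ≤ 1 / 5) :
    log 2 ≤ fskew η + fskewDeriv η * (1 - η) := by
  have hchord := fskew_le_tangent_of_le_half (t := 1 / 5) hη₀ (by linarith)
    ⟨by norm_num, by norm_num⟩
  have hslope : fskewDeriv (1 / 5) ≤ fskewDeriv η :=
    fskewDeriv_antitoneOn ⟨hη₀, by linarith⟩ ⟨by norm_num, by norm_num⟩ hη
  nlinarith [fskew_tangent_at_fifth_eval_one]

lemma fskew_le_tangent {η t : ℝ} (hη₀ : 0 < η) (hη : η ≤ 1 / 5) (ht : t ∈ Icc 0 1) :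
    fskew t ≤ fskew η + fskewDeriv η * (t - η) := by
  rcases le_or_gt t (1 / 2) with hth | hth
  · exact fskew_le_tangent_of_le_half hη₀ (by linarith) ⟨ht.1, hth⟩
  · have hmid := fskew_le_tangent_of_le_half hη₀ (by linarith) (t := 1 / 2) ⟨by norm_num, le_rfl⟩
    have hend := log_two_le_fskew_tangent_eval_one hη₀ hη
    have hconv := convexOn_fskew.2 (show (1 / 2 : ℝ) ∈ Icc (1 / 2) 1 by norm_num)
      (show (1 : ℝ) ∈ Icc (1 / 2) 1 by norm_num) (show 0 ≤ 2 - 2 * t by linarith [ht.2])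
      (show 0 ≤ 2 * t - 1 by linarith) (by ring)
    rw [show (2 - 2 * t) • (1 / 2 : ℝ) + (2 * t - 1) • 1 = t by simp; ring, smul_eq_mul,
      smul_eq_mul, fskew_one] at hconv
    nlinarith [ht.2]

lemma sum_mul_fskew_le {ι : Type*} (s : Finset ι) {w p : ι → ℝ} (hw : ∀ i ∈ s, 0 ≤ w i)
    (hw₁ : ∑ i ∈ s, w i = 1) (hp : ∀ i ∈ s, p i ∈ Icc 0 1)
    (hη : ∑ i ∈ s, w i * p i ≤ 1 / 5) :
    ∑ i ∈ s, w i * fskew (p i) ≤ fskew (∑ i ∈ s, w i * p i) := by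
  have hwp : ∀ i ∈ s, 0 ≤ w i * p i := fun i hi => mul_nonneg (hw i hi) (hp i hi).1
  have hη₀ : 0 ≤ ∑ i ∈ s, w i * p i := Finset.sum_nonneg hwp
  generalize hηdef : ∑ i ∈ s, w i * p i = η at hη hη₀ ⊢
  obtain ⟨c, hc⟩ : ∃ c, ∀ i ∈ s, w i * fskew (p i) ≤ w i * (fskew η + c * (p i - η)) := by
    rcases hη₀.eq_or_lt with hη₀ | hη₀
    · -- `fskew` has infinite slope at `0`, but `η = 0` forces `p i = 0` wherever `w i ≠ 0`
      refine ⟨0, fun i hi => le_of_eq ?_⟩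
      have := (Finset.sum_eq_zero_iff_of_nonneg hwp).1 (hηdef.trans hη₀.symm) i hi
      rcases mul_eq_zero.1 this with h | h <;> simp [h, ← hη₀]
    · exact ⟨fskewDeriv η, fun i hi =>
        mul_le_mul_of_nonneg_left (fskew_le_tangent hη₀ hη (hp i hi)) (hw i hi)⟩
  have hexpand : ∀ i,
      w i * (fskew η + c * (p i - η)) = fskew η * w i + c * (w i * p i) - c * η * w i :=
    fun i => by ring
  calc ∑ i ∈ s, w i * fskew (p i) ≤ ∑ i ∈ s, w i * (fskew η + c * (p i - η)) :=
        Finset.sum_le_sum hc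
    _ = fskew η := by
        simp only [hexpand, Finset.sum_sub_distrib, Finset.sum_add_distrib, ← Finset.mul_sum, hw₁,
          hηdef]
        ring

noncomputable def fskewPersp (u v : ℝ) : ℝ :=
  negMulLog (u / 2) + negMulLog (u / 2 + v) - negMulLog (v / 2) - negMulLog (u + v / 2)

lemma fskewPersp_mul_mul_one_sub (q s : ℝ) : fskewPersp (q * s) (q * (1 - s)) = q * fskew s := by
  rw [fskewPersp, show q * s / 2 + q * (1 - s) = q * (1 - s / 2) by ring,
    show q * s + q * (1 - s) / 2 = q * (1 - (1 - s) / 2) by ring,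
    show q * s / 2 = q * (s / 2) by ring, show q * (1 - s) / 2 = q * ((1 - s) / 2) by ring]
  simp only [negMulLog_mul, fskew, binH]
  ring

lemma fskewPersp_eq_mul_fskew (u v : ℝ) : fskewPersp u v = (u + v) * fskew (u / (u + v)) := by
  by_cases huv : u + v = 0
  · rw [show v = -u by linarith]
    simp only [fskewPersp, add_neg_cancel, zero_mul]
    ring_nf
  have := fskewPersp_mul_mul_one_sub (u + v) (u / (u + v))
  rwa [mul_div_cancel₀ u huv, show (u + v) * (1 - u / (u + v)) = v by field_simp; ring] at this

lemma sum_fskewPersp_le {ι : Type*} (s : Finset ι) {u v : ι → ℝ} (hu : ∀ i ∈ s, 0 ≤ u i)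
    (hv : ∀ i ∈ s, 0 ≤ v i) (huv : ∑ i ∈ s, (u i + v i) = 1) (hη : ∑ i ∈ s, u i ≤ 1 / 5) :
    ∑ i ∈ s, fskewPersp (u i) (v i) ≤ fskewPersp (∑ i ∈ s, u i) (∑ i ∈ s, v i) := by
  have hmass : ∀ i ∈ s, (u i + v i) * (u i / (u i + v i)) = u i := by
    intro i hi
    rcases (add_nonneg (hu i hi) (hv i hi)).eq_or_lt with h | h
    · rw [← h, zero_mul]; linarith [hu i hi, hv i hi]
    · exact mul_div_cancel₀ _ h.ne'
  have hp : ∀ i ∈ s, u i / (u i + v i) ∈ Icc 0 1 := fun i hi =>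
    ⟨div_nonneg (hu i hi) (add_nonneg (hu i hi) (hv i hi)),
      div_le_one_of_le₀ (le_add_of_nonneg_right (hv i hi)) (add_nonneg (hu i hi) (hv i hi))⟩
  have huv' : ∑ i ∈ s, u i + ∑ i ∈ s, v i = 1 := by rw [← Finset.sum_add_distrib, huv]
  simp only [fskewPersp_eq_mul_fskew, huv', one_mul, div_one]
  rw [← Finset.sum_congr rfl hmass] at hη ⊢
  exact sum_mul_fskew_le s (fun i hi => add_nonneg (hu i hi) (hv i hi)) huv hp hη

section Prob

variable {Ω B C D E : Type*} [MeasurableSpace Ω] {μ : Measure Ω}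

lemma prob_nonneg (f : Ω → B) (b : B) : 0 ≤ prob μ f b := ENNReal.toReal_nonneg

lemma prob_le_prob_of_preimage_subset [IsFiniteMeasure μ] {f : Ω → B} {g : Ω → C} {b : B} {c : C}
    (h : f ⁻¹' {b} ⊆ g ⁻¹' {c}) : prob μ f b ≤ prob μ g c :=
  ENNReal.toReal_mono (measure_ne_top μ _) (measure_mono h)

open Classical in
lemma prob_comp_eq_sum [IsFiniteMeasure μ] [Fintype B] [MeasurableSpace B]
    [MeasurableSingletonClass B] {Z : Ω → B} (hZ : Measurable Z) (g : B → C) (c : C) :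
    prob μ (fun ω => g (Z ω)) c = ∑ b, if g b = c then prob μ Z b else 0 := by
  rw [← Finset.sum_filter]
  simp only [prob]
  rw [← ENNReal.toReal_sum (fun b _ => measure_ne_top μ _),
    sum_measure_preimage_singleton _ (fun b _ => hZ (measurableSet_singleton b))]
  congr 2
  ext ω
  simp

lemma sum_prob_eq_one [IsProbabilityMeasure μ] [Fintype B] [MeasurableSpace B]
    [MeasurableSingletonClass B] {f : Ω → B} (hf : Measurable f) : ∑ b, prob μ f b = 1 := by
  simp only [prob]
  rw [← ENNReal.toReal_sum (fun b _ => measure_ne_top μ _),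
    sum_measure_preimage_singleton _ (fun b _ => hf (measurableSet_singleton b))]
  simp

lemma sum_prob_pair_left [IsFiniteMeasure μ] [Fintype B] [MeasurableSpace B]
    [MeasurableSingletonClass B] [Fintype C] [MeasurableSpace C] [MeasurableSingletonClass C]
    {f : Ω → B} {g : Ω → C} (hf : Measurable f) (hg : Measurable g) (c : C) :
    ∑ b, prob μ (fun ω => (f ω, g ω)) (b, c) = prob μ g c := by
  classical
  have h : prob μ g c = _ := prob_comp_eq_sum (hf.prodMk hg) Prod.snd c
  simp [h, Fintype.sum_prod_type]

lemma prob_triple_eq_mul_of_condIndepGiven [IsFiniteMeasure μ] {W : Ω → B} {X : Ω → C}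
    {Y : Ω → D} {K : C → D → ℝ} (hM : CondIndepGiven μ W X Y)
    (hK : ∀ x y, prob μ (fun ω => (X ω, Y ω)) (x, y) = prob μ X x * K x y) (w : B) (x : C) (y : D) :
    prob μ (fun ω => (W ω, X ω, Y ω)) (w, x, y) = prob μ (fun ω => (W ω, X ω)) (w, x) * K x y := by
  by_cases hx : prob μ X x = 0
  · have h₁ : prob μ (fun ω => (W ω, X ω, Y ω)) (w, x, y) ≤ prob μ X x :=
      prob_le_prob_of_preimage_subset fun ω h => by simp_all
    have h₂ : prob μ (fun ω => (W ω, X ω)) (w, x) ≤ prob μ X x :=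
      prob_le_prob_of_preimage_subset fun ω h => by simp_all
    rw [le_antisymm (hx ▸ h₁) (prob_nonneg _ _), le_antisymm (hx ▸ h₂) (prob_nonneg _ _), zero_mul]
  · refine mul_right_cancel₀ hx ?_
    rw [hM, hK]
    ring

open Classical in
lemma prob_pair_comp_eq_sum_of_condIndepGiven [IsFiniteMeasure μ]
    [Fintype B] [MeasurableSpace B] [MeasurableSingletonClass B]
    [Fintype C] [MeasurableSpace C] [MeasurableSingletonClass C]
    [Fintype D] [MeasurableSpace D] [MeasurableSingletonClass D]
    {W : Ω → B} {X : Ω → C} {Y : Ω → D} {K : C → D → ℝ}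
    (hW : Measurable W) (hX : Measurable X) (hY : Measurable Y) (hM : CondIndepGiven μ W X Y)
    (hK : ∀ x y, prob μ (fun ω => (X ω, Y ω)) (x, y) = prob μ X x * K x y)
    (φ : D → E) (w : B) (e : E) :
    prob μ (fun ω => (W ω, φ (Y ω))) (w, e)
      = ∑ x, prob μ (fun ω => (W ω, X ω)) (w, x) * ∑ y, if φ y = e then K x y else 0 := by
  have h : prob μ (fun ω => (W ω, φ (Y ω))) (w, e) = _ :=
    prob_comp_eq_sum (hW.prodMk (hX.prodMk hY)) (fun z => (z.1, φ z.2.2)) (w, e)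
  rw [h, Fintype.sum_prod_type, Fintype.sum_eq_single w fun x hx => by simp [hx]]
  simp only [Fintype.sum_prod_type, Prod.mk.injEq, true_and, Finset.mul_sum, mul_ite, mul_zero,
    prob_triple_eq_mul_of_condIndepGiven hM hK]

end Prob

section BSSC

variable {Ω A : Type*} [MeasurableSpace Ω] {μ : Measure Ω} [IsProbabilityMeasure μ]
  [Fintype A] [MeasurableSpace A] [MeasurableSingletonClass A] {V : Ω → A} {X Y1 Y2 : Ω → Bool}

lemma prob_pair_of_isBSSC (hV : Measurable V) (hX : Measurable X) (hY1 : Measurable Y1)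
    (hY2 : Measurable Y2) (hMarkov : CondIndepGiven μ V X (fun ω => (Y1 ω, Y2 ω)))
    (hBSSC : IsBSSC μ X Y1 Y2) (a : A) :
    prob μ (fun ω => (V ω, Y1 ω)) (a, false) = prob μ (fun ω => (V ω, X ω)) (a, false) / 2 ∧
    prob μ (fun ω => (V ω, Y1 ω)) (a, true)
      = prob μ (fun ω => (V ω, X ω)) (a, false) / 2 + prob μ (fun ω => (V ω, X ω)) (a, true) ∧
    prob μ (fun ω => (V ω, Y2 ω)) (a, false)
      = prob μ (fun ω => (V ω, X ω)) (a, false) + prob μ (fun ω => (V ω, X ω)) (a, true) / 2 ∧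
    prob μ (fun ω => (V ω, Y2 ω)) (a, true) = prob μ (fun ω => (V ω, X ω)) (a, true) / 2 := by
  have h₁ := prob_pair_comp_eq_sum_of_condIndepGiven hV hX (hY1.prodMk hY2) hMarkov
    (K := fun x y => bsscK x y.1 y.2) (fun x y => hBSSC x y.1 y.2) Prod.fst a
  have h₂ := prob_pair_comp_eq_sum_of_condIndepGiven hV hX (hY1.prodMk hY2) hMarkov
    (K := fun x y => bsscK x y.1 y.2) (fun x y => hBSSC x y.1 y.2) Prod.snd a
  dsimp only at h₁ h₂
  simp only [h₁, h₂, Fintype.sum_bool, Fintype.sum_prod_type, bsscK]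
  refine ⟨?_, ?_, ?_, ?_⟩ <;> norm_num <;> ring

lemma entropy_pair_sub_entropy_pair_of_isBSSC (hV : Measurable V) (hX : Measurable X)
    (hY1 : Measurable Y1) (hY2 : Measurable Y2)
    (hMarkov : CondIndepGiven μ V X (fun ω => (Y1 ω, Y2 ω))) (hBSSC : IsBSSC μ X Y1 Y2) :
    entropy μ (fun ω => (V ω, Y1 ω)) - entropy μ (fun ω => (V ω, Y2 ω))
      = ∑ a, fskewPersp (prob μ (fun ω => (V ω, X ω)) (a, false))
          (prob μ (fun ω => (V ω, X ω)) (a, true)) := by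
  have h := prob_pair_of_isBSSC hV hX hY1 hY2 hMarkov hBSSC
  simp only [entropy, Fintype.sum_prod_type, Fintype.sum_bool, fun a => (h a).1,
    fun a => (h a).2.1, fun a => (h a).2.2.1, fun a => (h a).2.2.2, ← Finset.sum_sub_distrib,
    fskewPersp]
  exact Finset.sum_congr rfl fun a _ => by ring

lemma entropy_sub_entropy_of_isBSSC (hV : Measurable V) (hX : Measurable X)
    (hY1 : Measurable Y1) (hY2 : Measurable Y2)
    (hMarkov : CondIndepGiven μ V X (fun ω => (Y1 ω, Y2 ω))) (hBSSC : IsBSSC μ X Y1 Y2) :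
    entropy μ Y1 - entropy μ Y2 = fskewPersp (prob μ X false) (prob μ X true) := by
  have h := prob_pair_of_isBSSC hV hX hY1 hY2 hMarkov hBSSC
  simp only [entropy, Fintype.sum_bool, ← sum_prob_pair_left hV hY1, ← sum_prob_pair_left hV hY2,
    ← sum_prob_pair_left hV hX, fun a => (h a).1, fun a => (h a).2.1, fun a => (h a).2.2.1,
    fun a => (h a).2.2.2, Finset.sum_add_distrib, ← Finset.sum_div, fskewPersp]
  ring

end BSSC

/-- For `V → X → (Y₁,Y₂)` with `(Y₁,Y₂)` a BSSC (`p = 1/2`) output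
of `X`: if `P(X = 0) ≤ 1/5` then `I(V;Y₂) ≤ I(V;Y₁)`. -/
theorem stmt11 {Ω A : Type*} [MeasurableSpace Ω]
    (μ : Measure Ω) [IsProbabilityMeasure μ]
    [Fintype A] [MeasurableSpace A] [MeasurableSingletonClass A]
    (V : Ω → A) (X Y1 Y2 : Ω → Bool)
    (hV : Measurable V) (hX : Measurable X) (hY1 : Measurable Y1) (hY2 : Measurable Y2)
    (hMarkov : CondIndepGiven μ V X (fun ω => (Y1 ω, Y2 ω)))
    (hBSSC : IsBSSC μ X Y1 Y2)
    (hη : prob μ X false ≤ 1 / 5) :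
    mutualInfo μ V Y2 ≤ mutualInfo μ V Y1 := by
  have hmarg := sum_prob_pair_left (μ := μ) hV hX
  have hmass : ∑ a, (prob μ (fun ω => (V ω, X ω)) (a, false)
      + prob μ (fun ω => (V ω, X ω)) (a, true)) = 1 := by
    rw [Finset.sum_add_distrib, hmarg, hmarg, add_comm, ← Fintype.sum_bool, sum_prob_eq_one hX]
  have key := sum_fskewPersp_le Finset.univ (fun _ _ => prob_nonneg _ _)
    (fun _ _ => prob_nonneg _ _) hmass (by rwa [hmarg])
  rw [hmarg, hmarg] at key
  have h₁ := entropy_pair_sub_entropy_pair_of_isBSSC hV hX hY1 hY2 hMarkov hBSSC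
  have h₂ := entropy_sub_entropy_of_isBSSC hV hX hY1 hY2 hMarkov hBSSC
  unfold mutualInfo
  linarith
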